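/- For any real c > 0, set x_i = i·c for i = 0, 1, …, 6 (equally spaced x-coordinates). Then d_{0,1}·d_{2,3}·d_{3,4}·d_{5,6} < d_{1,2}·d_{4,5}·d_{0,3}·d_{3,6} (where d_{i,j} = x_j − x_i); consequently there exist no real numbers y_0, …, y_6 such that the terrain with points p_i = (x_i, y_i) has visibility graph exactly G'. In other words, G' cannot be realized as the visibility graph of a terrain with uniform step lengths. -/

import Mathlib

/-!
Strict belowness is invariant under scaling the x-coordinates by `c > 0`, so one may take
`x i = i`; the product inequality then reads `1 < 9`. The edges `{0,4}`, `{0,5}`, `{1,6}`, `{2,6}`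
put `p 1`, `p 3`, `p 4` strictly below five segments, while each of the non-edges `{0,2}`, `{4,6}`,
`{1,4}`, `{1,5}`, `{2,5}` has a blocker on or above its segment. Each of the `2 · 3 · 2` choices of
blockers leaves an infeasible system of linear inequalities in `y`.
-/

/-- `p j` is strictly below the segment `p i p k`. -/
def StrictlyBelow {n : ℕ} (x y : Fin n → ℝ) (i j k : Fin n) : Prop :=
  (x k - x j) * y i - (x k - x i) * y j + (x j - x i) * y k > 0

/-- `p j` is strictly above the segment `p i p k`. -/
def StrictlyAbove {n : ℕ} (x y : Fin n → ℝ) (i j k : Fin n) : Prop :=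
  (x k - x j) * y i - (x k - x i) * y j + (x j - x i) * y k < 0

/-- `p j` lies on or above the segment `p i p k`. -/
def OnOrAbove {n : ℕ} (x y : Fin n → ℝ) (i j k : Fin n) : Prop :=
  (x k - x j) * y i - (x k - x i) * y j + (x j - x i) * y k ≤ 0

/-- For `i < k`, the points `p i` and `p k` see each other. -/
def Sees {n : ℕ} (x y : Fin n → ℝ) (i k : Fin n) : Prop :=
  (k : ℕ) = (i : ℕ) + 1 ∨ ∀ j : Fin n, i < j → j < k → StrictlyBelow x y i j k

/-- The visibility graph of the terrain, as a symmetric relation. -/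
def VisGraph {n : ℕ} (x y : Fin n → ℝ) (i k : Fin n) : Prop :=
  (i < k ∧ Sees x y i k) ∨ (k < i ∧ Sees x y k i)

/-- The edges `{i,k}` (with `i < k`) of the graph `G'` on `{0,…,6}`. -/
def GpEdge (i k : ℕ) : Prop :=
  (i, k) ∈ [(0,1),(1,2),(2,3),(3,4),(4,5),(5,6),
            (0,3),(0,4),(0,5),(0,6),(1,3),(1,6),(2,6),(3,5),(3,6)]

instance (i k : ℕ) : Decidable (GpEdge i k) := inferInstanceAs (Decidable (_ ∈ _))

section Terrain

variable {n : ℕ} {x y : Fin n → ℝ}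

theorem strictlyBelow_mul_left_iff {c : ℝ} (hc : 0 < c) {i j k : Fin n} :
    StrictlyBelow (fun m => c * x m) y i j k ↔ StrictlyBelow x y i j k := by
  unfold StrictlyBelow
  conv_rhs => rw [gt_iff_lt, ← mul_pos_iff_of_pos_left hc]
  ring_nf

theorem sees_mul_left_iff {c : ℝ} (hc : 0 < c) {i k : Fin n} :
    Sees (fun m => c * x m) y i k ↔ Sees x y i k := by
  simp only [Sees, strictlyBelow_mul_left_iff hc]

theorem Sees.strictlyBelow {i j k : Fin n} (h : Sees x y i k) (hik : (i : ℕ) + 1 ≠ k)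
    (hij : i < j) (hjk : j < k) : StrictlyBelow x y i j k :=
  h.resolve_left hik.symm j hij hjk

theorem exists_not_strictlyBelow_of_not_sees {i k : Fin n} (h : ¬ Sees x y i k) :
    ∃ j, i < j ∧ j < k ∧ ¬ StrictlyBelow x y i j k := by
  simp only [Sees, not_or, not_forall, exists_prop] at h
  exact h.2

end Terrain

theorem Gp_not_realizable_unit_steps (y : Fin 7 → ℝ) :
    ¬ ∀ i k : Fin 7, i < k → (Sees (fun m : Fin 7 => ((m : ℕ) : ℝ)) y i k ↔ GpEdge i k) := by
  intro hy
  have below (i j k : Fin 7) (h : GpEdge i k ∧ (i : ℕ) + 1 ≠ k ∧ i < j ∧ j < k) :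
      StrictlyBelow (fun m => ((m : ℕ) : ℝ)) y i j k :=
    ((hy i k (h.2.2.1.trans h.2.2.2)).2 h.1).strictlyBelow h.2.1 h.2.2.1 h.2.2.2
  have blocked (i k : Fin 7) (h : ¬ GpEdge i k ∧ i < k) :
      ∃ j, i < j ∧ j < k ∧ ¬ StrictlyBelow (fun m => ((m : ℕ) : ℝ)) y i j k :=
    exists_not_strictlyBelow_of_not_sees (mt (hy i k h.2).1 h.1)
  have b014 := below 0 1 4 (by decide)
  have b015 := below 0 1 5 (by decide)
  have b146 := below 1 4 6 (by decide)
  have b236 := below 2 3 6 (by decide)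
  have b246 := below 2 4 6 (by decide)
  obtain ⟨j02, _, _, a02⟩ := blocked 0 2 (by decide)
  obtain ⟨j46, _, _, a46⟩ := blocked 4 6 (by decide)
  obtain ⟨j14, _, _, a14⟩ := blocked 1 4 (by decide)
  obtain ⟨j15, _, _, a15⟩ := blocked 1 5 (by decide)
  obtain ⟨j25, _, _, a25⟩ := blocked 2 5 (by decide)
  obtain rfl : j02 = 1 := by omega
  obtain rfl : j46 = 5 := by omega
  obtain rfl | rfl : j14 = 2 ∨ j14 = 3 := by omega
  all_goals obtain rfl | rfl | rfl : j15 = 2 ∨ j15 = 3 ∨ j15 = 4 := by omega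
  all_goals obtain rfl | rfl : j25 = 3 ∨ j25 = 4 := by omega
  all_goals
    norm_num [StrictlyBelow] at b014 b015 b146 b236 b246 a02 a46 a14 a15 a25
    linarith

theorem Gp_not_uniform_steps (c : ℝ) (hc : 0 < c) (x : Fin 7 → ℝ)
    (hx : ∀ i : Fin 7, x i = (i : ℕ) * c) :
    (x 1 - x 0) * (x 3 - x 2) * (x 4 - x 3) * (x 6 - x 5) <
      (x 2 - x 1) * (x 5 - x 4) * (x 3 - x 0) * (x 6 - x 3) ∧
    ¬ ∃ y : Fin 7 → ℝ, ∀ i k : Fin 7, i < k → (Sees x y i k ↔ GpEdge (i : ℕ) (k : ℕ)) := by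
  obtain rfl : x = fun m : Fin 7 => c * ((m : ℕ) : ℝ) :=
    funext fun m => (hx m).trans (mul_comm _ _)
  constructor
  · norm_num
    linarith [pow_pos hc 4]
  · rintro ⟨y, hy⟩
    exact Gp_not_realizable_unit_steps y fun i k hik =>
      (sees_mul_left_iff hc).symm.trans (hy i k hik)
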